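/- arXiv:2502.11556 — 3 statements merged into one kernel-verified Lean document; each statement's English description precedes it below -/
import Mathlib

section
/- Let A ∈ ℝ^{n×n}, B ∈ ℝ^{n×m}, R ∈ ℝ^{m×m} symmetric positive-definite, X ∈ ℝ^{n×n} symmetric positive-definite, and Y ∈ ℝ^{n×n}. If XAᵀ + AX − YᵀBR⁻¹Bᵀ − BR⁻¹BᵀY ≺ 0, then the matrix A − BR⁻¹BᵀP, with P = YX⁻¹, is Hurwitz (all its eigenvalues have negative real part). -/
/-!
With `Y = P X`, the LMI says `M X + X Mᵀ ≺ 0` for the closed-loop matrix `M = A - B R⁻¹ Bᵀ P`,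
i.e. `X` is a Lyapunov certificate for `Mᵀ`, which has the same spectrum as `M`. If `Mᵀ v = μ v`
with `v ≠ 0`, then `vᴴ (M X + X Mᵀ) v = 2 Re μ · vᴴ X v`, and `vᴴ X v > 0` forces `Re μ < 0`.
-/

open Matrix
open scoped ComplexOrder

namespace Matrix

variable {ι : Type*} [Fintype ι]

theorem spectrum_transpose {α : Type*} [CommRing α] [DecidableEq ι] (M : Matrix ι ι α) :
    spectrum α Mᵀ = spectrum α M := by
  ext r
  simp only [mem_spectrum_iff_not_isUnit_eval_charpoly, charpoly_transpose]

theorem re_dotProduct_map_algebraMap (N : Matrix ι ι ℝ) (w : ι → ℂ) :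
    (star w ⬝ᵥ (N.map (algebraMap ℝ ℂ) *ᵥ w)).re =
      (fun i => (w i).re) ⬝ᵥ (N *ᵥ fun i => (w i).re) +
        (fun i => (w i).im) ⬝ᵥ (N *ᵥ fun i => (w i).im) := by
  simp only [dotProduct, mulVec, Pi.star_apply, map_apply, Finset.mul_sum,
    ← Finset.sum_add_distrib, Complex.re_sum]
  refine Finset.sum_congr rfl fun i _ => Finset.sum_congr rfl fun j _ => ?_
  simp [Complex.mul_re, Complex.mul_im]

theorem PosDef.map_algebraMap {N : Matrix ι ι ℝ} (hN : N.PosDef) :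
    (N.map (algebraMap ℝ ℂ)).PosDef := by
  have hNc : (N.map (algebraMap ℝ ℂ)).IsHermitian :=
    hN.isHermitian.map _ algebraMap_star_comm
  refine .of_dotProduct_mulVec_pos hNc fun w hw => RCLike.pos_iff.mpr
    ⟨?_, hNc.im_star_dotProduct_mulVec_self w⟩
  have hnonneg : ∀ x, 0 ≤ x ⬝ᵥ N *ᵥ x := by
    simpa using hN.posSemidef.dotProduct_mulVec_nonneg
  have hpos : ∀ x ≠ 0, 0 < x ⬝ᵥ N *ᵥ x := fun x hx => by
    simpa using hN.dotProduct_mulVec_pos hx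
  rw [RCLike.re_to_complex, re_dotProduct_map_algebraMap]
  obtain hre | him : (fun i => (w i).re) ≠ 0 ∨ (fun i => (w i).im) ≠ 0 := by
    by_contra! h
    exact hw (funext fun i => Complex.ext (congrFun h.1 i) (congrFun h.2 i))
  · exact add_pos_of_pos_of_nonneg (hpos _ hre) (hnonneg _)
  · exact add_pos_of_nonneg_of_pos (hnonneg _) (hpos _ him)

theorem re_lt_zero_of_mem_spectrum_of_lyapunov [DecidableEq ι] {M S : Matrix ι ι ℂ}
    (hS : S.PosDef) (hQ : (-(Mᴴ * S + S * M)).PosDef) {μ : ℂ} (hμ : μ ∈ spectrum ℂ M) :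
    μ.re < 0 := by
  rw [← spectrum_toLin', ← Module.End.hasEigenvalue_iff_mem_spectrum] at hμ
  obtain ⟨v, hv⟩ := hμ.exists_hasEigenvector
  have hMv : M *ᵥ v = μ • v := hv.apply_eq_smul
  have hvM : star v ᵥ* Mᴴ = star μ • star v := by rw [← star_mulVec, hMv, star_smul]
  have hquad : star v ⬝ᵥ (-(Mᴴ * S + S * M)) *ᵥ v = (-2 * μ.re : ℝ) * (star v ⬝ᵥ S *ᵥ v) := by
    rw [neg_mulVec, add_mulVec, ← mulVec_mulVec, ← mulVec_mulVec, hMv, dotProduct_neg,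
      dotProduct_add, dotProduct_mulVec, hvM, mulVec_smul]
    simp only [smul_dotProduct, dotProduct_smul, smul_eq_mul, ← add_mul, Complex.star_def]
    rw [Complex.ofReal_mul, Complex.re_eq_add_conj]
    push_cast
    ring
  have hQv := hQ.re_dotProduct_pos hv.2
  rw [hquad, RCLike.re_to_complex, Complex.re_ofReal_mul] at hQv
  linarith [(pos_iff_pos_of_mul_pos hQv).mpr (hS.re_dotProduct_pos hv.2)]

theorem re_lt_zero_of_mem_spectrum_map_of_lyapunov [DecidableEq ι] {M S : Matrix ι ι ℝ}
    (hS : S.PosDef) (hQ : (-(Mᵀ * S + S * M)).PosDef) {μ : ℂ}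
    (hμ : μ ∈ spectrum ℂ (M.map (algebraMap ℝ ℂ))) : μ.re < 0 := by
  refine re_lt_zero_of_mem_spectrum_of_lyapunov hS.map_algebraMap ?_ hμ
  have hmap : (-(Mᵀ * S + S * M)).map (algebraMap ℝ ℂ) =
      -((M.map (algebraMap ℝ ℂ))ᴴ * S.map (algebraMap ℝ ℂ) +
        S.map (algebraMap ℝ ℂ) * M.map (algebraMap ℝ ℂ)) := by
    rw [← conjTranspose_map _ algebraMap_star_comm, conjTranspose_eq_transpose_of_trivial]
    simp only [← RingHom.mapMatrix_apply, map_neg, map_add, map_mul]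
  exact hmap ▸ hQ.map_algebraMap

theorem closedLoop_lyapunov_eq {α : Type*} [CommRing α] [DecidableEq ι]
    {A K X Y : Matrix ι ι α} (hK : Kᵀ = K) (hX : Xᵀ = X) (hXdet : IsUnit X.det) :
    (A - K * (Y * X⁻¹)) * X + X * (A - K * (Y * X⁻¹))ᵀ = X * Aᵀ + A * X - Yᵀ * K - K * Y := by
  have hXinv : (X⁻¹)ᵀ = X⁻¹ := by rw [transpose_nonsing_inv, hX]
  simp only [sub_mul, mul_sub, transpose_sub, transpose_mul, hK, hXinv, Matrix.mul_assoc,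
    nonsing_inv_mul X hXdet, mul_nonsing_inv_cancel_left X _ hXdet, Matrix.mul_one]
  abel

end Matrix

/-- Stabilisation of LTI systems: if `X ≻ 0`, `R ≻ 0` and
`X Aᵀ + A X - Yᵀ B R⁻¹ Bᵀ - B R⁻¹ Bᵀ Y ≺ 0`, then `A - B R⁻¹ Bᵀ P` with `P = Y X⁻¹`
is Hurwitz. -/
theorem stabilisation_hurwitz {n m : ℕ} (A : Matrix (Fin n) (Fin n) ℝ)
    (B : Matrix (Fin n) (Fin m) ℝ) (R : Matrix (Fin m) (Fin m) ℝ)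
    (X Y : Matrix (Fin n) (Fin n) ℝ)
    (hR : R.PosDef) (hX : X.PosDef)
    (hLMI : (-(X * Aᵀ + A * X - Yᵀ * B * R⁻¹ * Bᵀ - B * R⁻¹ * Bᵀ * Y)).PosDef) :
    ∀ μ ∈ spectrum ℂ ((A - B * R⁻¹ * Bᵀ * (Y * X⁻¹)).map (algebraMap ℝ ℂ)),
      μ.re < 0 := by
  intro μ hμ
  have hK : (B * R⁻¹ * Bᵀ)ᵀ = B * R⁻¹ * Bᵀ := by
    rw [transpose_mul, transpose_mul, transpose_transpose, transpose_nonsing_inv,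
      ← conjTranspose_eq_transpose_of_trivial, hR.isHermitian.eq, Matrix.mul_assoc]
  have hXsymm : Xᵀ = X := (isHermitian_iff_isSymm.mp hX.isHermitian).eq
  rw [← spectrum_transpose, ← transpose_map] at hμ
  refine re_lt_zero_of_mem_spectrum_map_of_lyapunov hX ?_ hμ
  rwa [transpose_transpose, closedLoop_lyapunov_eq hK hXsymm hX.det_pos.ne'.isUnit,
    ← Matrix.mul_assoc Yᵀ, ← Matrix.mul_assoc Yᵀ]
end

section
/- Let A ∈ ℝ^{n×n}, B ∈ ℝ^{n×m}, R symmetric positive-definite, Q symmetric positive-semidefinite, W symmetric positive-definite, and P, P̲, Z ∈ ℝ^{n×n} with Z symmetric. Suppose Z satisfies AᵀZ + ZA + Q − PᵀBR⁻¹BᵀZ − ZBR⁻¹BᵀP + PᵀBR⁻¹BᵀP = 0 and that Aᵀ(P̲ − P) + (P̲ − P)ᵀA − Q + W − P̲ᵀBR⁻¹BᵀP̲ ≻ 0. Then (A − BR⁻¹BᵀP)ᵀ(P − P̲ − Z) + (P − P̲ − Z)ᵀ(A − BR⁻¹BᵀP) − W ≺ 0. -/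
/-!
With `S = B R⁻¹ Bᵀ`, expanding the closed-loop expression shows that its negative equals
the left side of the strict inequality, plus the positive-semidefinite completion
`(P - P̲)ᵀ S (P - P̲)`, plus the left side of the `Z`-equation (which vanishes). A positive-definite
matrix plus a positive-semidefinite one is positive-definite.
-/

open Matrix

namespace Matrix

variable {ι κ : Type*} [Fintype ι] [Fintype κ]

theorem neg_closedLoop_lyapunov_eq {α : Type*} [CommRing α]
    (A S P Pu Z W Q : Matrix ι ι α) (hS : Sᵀ = S) (hZ : Zᵀ = Z) :
    -((A - S * P)ᵀ * (P - Pu - Z) + (P - Pu - Z)ᵀ * (A - S * P) - W) =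
      (Aᵀ * (Pu - P) + (Pu - P)ᵀ * A - Q + W - Puᵀ * S * Pu) + (P - Pu)ᵀ * S * (P - Pu) +
        (Aᵀ * Z + Z * A + Q - Pᵀ * S * Z - Z * S * P + Pᵀ * S * P) := by
  simp only [transpose_sub, transpose_mul, hS, hZ]
  noncomm_ring

theorem PosDef.posSemidef_mul_inv_mul_transpose [DecidableEq κ] {R : Matrix κ κ ℝ}
    (hR : R.PosDef) (B : Matrix ι κ ℝ) : (B * R⁻¹ * Bᵀ).PosSemidef := by
  simpa only [conjTranspose_eq_transpose_of_trivial] using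
    hR.inv.posSemidef.mul_mul_conjTranspose_same B

theorem PosSemidef.transpose_mul_mul_same {S : Matrix ι ι ℝ} (hS : S.PosSemidef)
    (X : Matrix ι κ ℝ) : (Xᵀ * S * X).PosSemidef := by
  simpa only [conjTranspose_eq_transpose_of_trivial] using hS.conjTranspose_mul_mul_same X

end Matrix

theorem key_algebraic_step_general {n m : ℕ} (A : Matrix (Fin n) (Fin n) ℝ)
    (B : Matrix (Fin n) (Fin m) ℝ) (R : Matrix (Fin m) (Fin m) ℝ)
    (Q W P Pu Z : Matrix (Fin n) (Fin n) ℝ)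
    (hR : R.PosDef) (hZsymm : Z.IsSymm)
    (hZeq : Aᵀ * Z + Z * A + Q - Pᵀ * B * R⁻¹ * Bᵀ * Z - Z * B * R⁻¹ * Bᵀ * P +
      Pᵀ * B * R⁻¹ * Bᵀ * P = 0)
    (hIneq : (Aᵀ * (Pu - P) + (Pu - P)ᵀ * A - Q + W - Puᵀ * B * R⁻¹ * Bᵀ * Pu).PosDef) :
    (-((A - B * R⁻¹ * Bᵀ * P)ᵀ * (P - Pu - Z) + (P - Pu - Z)ᵀ * (A - B * R⁻¹ * Bᵀ * P)
        - W)).PosDef := by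
  have hS := hR.posSemidef_mul_inv_mul_transpose B
  have hCompletion := hS.transpose_mul_mul_same (P - Pu)
  have key := neg_closedLoop_lyapunov_eq A (B * R⁻¹ * Bᵀ) P Pu Z W Q hS.isHermitian hZsymm
  simp only [Matrix.mul_assoc] at key hZeq hIneq hCompletion ⊢
  rw [key, hZeq, add_zero]
  exact hIneq.add_posSemidef hCompletion

/-- Key algebraic step of Theorem 3: from the `Z`-equation and the strict matrix inequality
in `P̲`, derive the closed-loop Lyapunov-like inequality for `P - P̲ - Z`. -/
theorem key_algebraic_step {n m : ℕ} (A : Matrix (Fin n) (Fin n) ℝ)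
    (B : Matrix (Fin n) (Fin m) ℝ) (R : Matrix (Fin m) (Fin m) ℝ)
    (Q W P Pu Z : Matrix (Fin n) (Fin n) ℝ)
    (hR : R.PosDef) (hQ : Q.PosSemidef) (hW : W.PosDef) (hZsymm : Z.IsSymm)
    (hZeq : Aᵀ * Z + Z * A + Q - Pᵀ * B * R⁻¹ * Bᵀ * Z - Z * B * R⁻¹ * Bᵀ * P +
      Pᵀ * B * R⁻¹ * Bᵀ * P = 0)
    (hIneq : (Aᵀ * (Pu - P) + (Pu - P)ᵀ * A - Q + W - Puᵀ * B * R⁻¹ * Bᵀ * Pu).PosDef) :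
    (-((A - B * R⁻¹ * Bᵀ * P)ᵀ * (P - Pu - Z) + (P - Pu - Z)ᵀ * (A - B * R⁻¹ * Bᵀ * P)
        - W)).PosDef :=
  key_algebraic_step_general A B R Q W P Pu Z hR hZsymm hZeq hIneq
end

section
/- Let M ∈ ℝ^{n×n} be symmetric negative-definite, W symmetric positive-definite, Z symmetric positive-semidefinite, and P, P̲, P̂ ∈ ℝ^{n×n} such that Mᵀ(P − P̲ − Z) + (P − P̲ − Z)ᵀM − W ≺ 0 and M P̂ + P̂ᵀ M + W = 0. Then x₀ᵀ Z x₀ < trace(P − P̲ + P̂) · x₀ᵀ x₀ for every nonzero x₀ ∈ ℝⁿ. -/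
/-!
Put `Q := -M` and `T := P - P̲ - Z + P̂`. Eliminating `W` with the Lyapunov equation for `P̂`
turns the hypothesis into `Q T + Tᵀ Q ≻ 0`, and then `2 trace T = trace (Q⁻¹ (Q T + Tᵀ Q)) > 0`,
because the trace of a product of positive definite matrices is positive. Hence
`trace Z < trace (P - P̲ + P̂)`, while `x₀ᵀ Z x₀ ≤ trace Z · x₀ᵀ x₀` for positive semidefinite `Z`
(Cauchy–Schwarz on each term of `Z = ∑ vᵢ vᵢᵀ`).
-/

open Matrix
open scoped ComplexOrder

namespace Matrix

variable {n : Type*} [Fintype n]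

lemma dotProduct_sq_le_dotProduct_self_mul (v x : n → ℝ) :
    (v ⬝ᵥ x) ^ 2 ≤ (v ⬝ᵥ v) * (x ⬝ᵥ x) := by
  simpa only [dotProduct, sq] using Finset.sum_mul_sq_le_sq_mul_sq Finset.univ v x

lemma PosSemidef.dotProduct_mulVec_le_trace_mul {Z : Matrix n n ℝ} (hZ : Z.PosSemidef)
    (x : n → ℝ) : x ⬝ᵥ (Z *ᵥ x) ≤ Z.trace * (x ⬝ᵥ x) := by
  obtain ⟨m, v, rfl⟩ := posSemidef_iff_eq_sum_vecMulVec.mp hZ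
  simp only [star_trivial, sum_mulVec, dotProduct_sum, trace_sum, Finset.sum_mul]
  gcongr with i
  rw [vecMulVec_mulVec, op_smul_eq_smul, dotProduct_smul, smul_eq_mul, dotProduct_comm x,
    ← sq, trace_vecMulVec]
  exact dotProduct_sq_le_dotProduct_self_mul (v i) x

lemma PosSemidef.trace_mul_pos {𝕜 : Type*} [RCLike 𝕜] {A B : Matrix n n 𝕜} (hA : A.PosSemidef)
    (hA0 : A ≠ 0) (hB : B.PosDef) : 0 < (A * B).trace := by
  obtain ⟨m, v, rfl⟩ := posSemidef_iff_eq_sum_vecMulVec.mp hA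
  simp only [Finset.sum_mul, trace_sum, vecMulVec_mul, trace_vecMulVec, dotProduct_comm (v _),
    ← dotProduct_mulVec]
  obtain ⟨i, hi⟩ : ∃ i, v i ≠ 0 := by
    by_contra! hv
    simp [hv] at hA0
  exact Finset.sum_pos' (fun j _ ↦ hB.posSemidef.dotProduct_mulVec_nonneg (v j))
    ⟨i, Finset.mem_univ i, hB.dotProduct_mulVec_pos hi⟩

lemma PosDef.trace_pos_of_mul_add_transpose_mul [DecidableEq n] [Nonempty n]
    {Q T : Matrix n n ℝ} (hQ : Q.PosDef) (hS : (Q * T + Tᵀ * Q).PosDef) : 0 < T.trace := by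
  have : Invertible Q := hQ.isUnit.invertible
  have hQinv : Q⁻¹ ≠ 0 := (isUnit_nonsing_inv_iff.mpr hQ.isUnit).ne_zero
  have htrace : (Q⁻¹ * (Q * T + Tᵀ * Q)).trace = 2 * T.trace := by
    rw [mul_add, ← mul_assoc, inv_mul_of_invertible, one_mul, trace_add, trace_mul_comm,
      mul_assoc, mul_inv_of_invertible, mul_one, trace_transpose, two_mul]
  have := hQ.inv.posSemidef.trace_mul_pos hQinv hS
  linarith

end Matrix

theorem suboptimality_bound_general {n : ℕ} (M W Z P Pu Ph : Matrix (Fin n) (Fin n) ℝ)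
    (hMneg : (-M).PosDef) (hZ : Z.PosSemidef)
    (hIneq : (-(Mᵀ * (P - Pu - Z) + (P - Pu - Z)ᵀ * M - W)).PosDef)
    (hPh : M * Ph + Phᵀ * M + W = 0) :
    ∀ x₀ : Fin n → ℝ, x₀ ≠ 0 →
      x₀ ⬝ᵥ (Z *ᵥ x₀) < (P - Pu + Ph).trace * (x₀ ⬝ᵥ x₀) := by
  intro x₀ hx₀
  obtain ⟨i, -⟩ := Function.ne_iff.mp hx₀
  have : Nonempty (Fin n) := ⟨i⟩
  have hMsymm : Mᵀ = M := by simpa using hMneg.isHermitian.eq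
  have hW : W = -(M * Ph + Phᵀ * M) := eq_neg_of_add_eq_zero_right hPh
  have htrace : 0 < (P - Pu - Z + Ph).trace := by
    refine hMneg.trace_pos_of_mul_add_transpose_mul ?_
    convert hIneq using 1
    rw [hMsymm, hW, transpose_add]
    noncomm_ring
  have hx₀ : 0 < x₀ ⬝ᵥ x₀ := by simpa using dotProduct_star_self_pos_iff.mpr hx₀
  calc x₀ ⬝ᵥ (Z *ᵥ x₀) ≤ Z.trace * (x₀ ⬝ᵥ x₀) := hZ.dotProduct_mulVec_le_trace_mul x₀
    _ < (Z.trace + (P - Pu - Z + Ph).trace) * (x₀ ⬝ᵥ x₀) := by gcongr; linarith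
    _ = (P - Pu + Ph).trace * (x₀ ⬝ᵥ x₀) := by rw [← trace_add]; congr 2; abel

/-- Suboptimality bound: for symmetric negative-definite `M`, positive-definite `W`,
positive-semidefinite `Z`, if `Mᵀ(P - P̲ - Z) + (P - P̲ - Z)ᵀ M - W ≺ 0` and
`M P̂ + P̂ᵀ M + W = 0`, then `x₀ᵀ Z x₀ < trace(P - P̲ + P̂) · x₀ᵀ x₀` for all nonzero `x₀`. -/
theorem suboptimality_bound {n : ℕ} (M W Z P Pu Ph : Matrix (Fin n) (Fin n) ℝ)
    (hMsymm : M.IsSymm) (hMneg : (-M).PosDef) (hW : W.PosDef) (hZ : Z.PosSemidef)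
    (hIneq : (-(Mᵀ * (P - Pu - Z) + (P - Pu - Z)ᵀ * M - W)).PosDef)
    (hPh : M * Ph + Phᵀ * M + W = 0) :
    ∀ x₀ : Fin n → ℝ, x₀ ≠ 0 →
      x₀ ⬝ᵥ (Z *ᵥ x₀) < (P - Pu + Ph).trace * (x₀ ⬝ᵥ x₀) :=
  suboptimality_bound_general M W Z P Pu Ph hMneg hZ hIneq hPh
end
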